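/- For any pairwise distinct i, j, k, l ∈ {1,…,9}, the map J_{i,j,k,l} on L_X preserves the bilinear form, i.e. ⟨J(λ), J(μ)⟩ = ⟨λ,μ⟩ for all λ, μ ∈ L_X, and it fixes both the anticanonical class δ = 3𝓔₀ − 𝓔₁ − ⋯ − 𝓔₉ and the class 2𝓔₀ − 𝓔ᵢ − 𝓔ⱼ − 𝓔ₖ − 𝓔ₗ. -/

import Mathlib

open Finset

/-- `L_X`: the free ℤ-module with basis `𝓔₀, 𝓔₁, …, 𝓔₉`. -/
abbrev LX : Type := Fin 10 → ℤ

noncomputable def basisX : Module.Basis (Fin 10) ℤ LX := Pi.basisFun ℤ (Fin 10)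

/-- The basis vector `𝓔ₐ` of `L_X`. -/
noncomputable def EX (a : Fin 10) : LX := basisX a

/-- The symmetric bilinear form on `L_X` with `⟨𝓔₀,𝓔₀⟩ = 1`, `⟨𝓔ᵢ,𝓔ᵢ⟩ = -1` for
`i = 1,…,9`, and `⟨𝓔ₐ,𝓔_b⟩ = 0` for `a ≠ b`. -/
noncomputable def formX : LX →ₗ[ℤ] LX →ₗ[ℤ] ℤ :=
  Matrix.toLinearMap₂' ℤ (Matrix.diagonal (fun a : Fin 10 => if a = 0 then (1 : ℤ) else -1))

/-- The anticanonical class `δ = 3𝓔₀ - 𝓔₁ - ⋯ - 𝓔₉`. -/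
noncomputable def deltaX : LX := (3 : ℤ) • EX 0 - ∑ k ∈ ({0} : Finset (Fin 10))ᶜ, EX k

/-- The Kac translation `T_α(λ) = λ + ⟨δ,λ⟩α + (⟨δ,λ⟩ - ⟨α,λ⟩)δ` on `L_X`. -/
noncomputable def kacX (α : LX) : LX →ₗ[ℤ] LX :=
  LinearMap.id + (formX deltaX).smulRight α + (formX deltaX - formX α).smulRight deltaX

/-- The involution action `J_{i,j,k,l}` on `L_X` (for pairwise distinct `i,j,k,l ∈ {1,…,9}`):
`J(𝓔₀) = 11𝓔₀ - 5(𝓔ᵢ+𝓔ⱼ+𝓔ₖ+𝓔ₗ) - 2Σ'𝓔ₘ`,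
`J(𝓔ₐ) = 5𝓔₀ - 2(𝓔ᵢ+𝓔ⱼ+𝓔ₖ+𝓔ₗ) - 𝓔ₐ - Σ'𝓔ₘ` for `a ∈ {i,j,k,l}`,
`J(𝓔ₘ) = 2𝓔₀ - (𝓔ᵢ+𝓔ⱼ+𝓔ₖ+𝓔ₗ) - 𝓔ₘ` otherwise,
where `Σ'` is the sum over `m ∈ {1,…,9} \ {i,j,k,l}`. -/
noncomputable def JX (i j k l : Fin 10) : LX →ₗ[ℤ] LX :=
  basisX.constr ℤ (fun a =>
    if a = 0 then
      (11 : ℤ) • EX 0 - (5 : ℤ) • (EX i + EX j + EX k + EX l)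
        - (2 : ℤ) • ∑ m ∈ ({0, i, j, k, l} : Finset (Fin 10))ᶜ, EX m
    else if a = i ∨ a = j ∨ a = k ∨ a = l then
      (5 : ℤ) • EX 0 - (2 : ℤ) • (EX i + EX j + EX k + EX l) - EX a
        - ∑ m ∈ ({0, i, j, k, l} : Finset (Fin 10))ᶜ, EX m
    else (2 : ℤ) • EX 0 - (EX i + EX j + EX k + EX l) - EX a)

lemma formX_EX (a b : Fin 10) :
    formX (EX a) (EX b) = if a = b then (if a = 0 then 1 else -1) else 0 := by
  simp only [formX, EX, basisX, Matrix.toLinearMap₂'_apply, Matrix.diagonal, Pi.basisFun_apply]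
  rw [Finset.sum_eq_single a]
  · rcases eq_or_ne a b with rfl | h
    · simp [Pi.single_apply]
    · simp [Pi.single_apply, h, Ne.symm h]
  · intro c _ hca
    simp [Pi.single_apply, hca, Ne.symm hca]
  · simp

noncomputable def sX (i j k l : Fin 10) : LX := ∑ m ∈ ({0, i, j, k, l} : Finset (Fin 10))ᶜ, EX m

lemma formX_sX_EX (i j k l b : Fin 10) :
    formX (sX i j k l) (EX b)
      = if b ∈ ({0, i, j, k, l} : Finset (Fin 10)) then 0 else -1 := by
  rw [sX, map_sum, LinearMap.sum_apply]
  simp only [formX_EX]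
  rw [Finset.sum_ite_eq' _ b]
  by_cases hb : b ∈ ({0, i, j, k, l} : Finset (Fin 10))
  · rw [if_neg (Finset.notMem_compl.mpr hb), if_pos hb]
  · have hb0 : b ≠ 0 := fun h => hb (by simp [h])
    rw [if_pos (Finset.mem_compl.mpr hb), if_neg hb, if_neg hb0]

lemma formX_EX_sX (i j k l b : Fin 10) :
    formX (EX b) (sX i j k l)
      = if b ∈ ({0, i, j, k, l} : Finset (Fin 10)) then 0 else -1 := by
  rw [sX, map_sum]
  simp only [formX_EX]
  rw [Finset.sum_ite_eq _ b]
  by_cases hb : b ∈ ({0, i, j, k, l} : Finset (Fin 10))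
  · rw [if_neg (Finset.notMem_compl.mpr hb), if_pos hb]
  · have hb0 : b ≠ 0 := fun h => hb (by simp [h])
    rw [if_pos (Finset.mem_compl.mpr hb), if_neg hb, if_neg hb0]

lemma card_five (i j k l : Fin 10)
    (hi : i ≠ 0) (hj : j ≠ 0) (hk : k ≠ 0) (hl : l ≠ 0)
    (hij : i ≠ j) (hik : i ≠ k) (hil : i ≠ l) (hjk : j ≠ k) (hjl : j ≠ l) (hkl : k ≠ l) :
    ({0, i, j, k, l} : Finset (Fin 10)).card = 5 := by
  rw [Finset.card_insert_of_notMem, Finset.card_insert_of_notMem,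
    Finset.card_insert_of_notMem, Finset.card_insert_of_notMem, Finset.card_singleton] <;>
    simp_all [Finset.mem_insert, eq_comm]

lemma formX_sX_sX (i j k l : Fin 10)
    (hi : i ≠ 0) (hj : j ≠ 0) (hk : k ≠ 0) (hl : l ≠ 0)
    (hij : i ≠ j) (hik : i ≠ k) (hil : i ≠ l) (hjk : j ≠ k) (hjl : j ≠ l) (hkl : k ≠ l) :
    formX (sX i j k l) (sX i j k l) = -5 := by
  nth_rewrite 1 [sX]
  rw [map_sum, LinearMap.sum_apply]
  rw [Finset.sum_congr rfl (fun m _ => formX_EX_sX i j k l m)]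
  rw [Finset.sum_congr rfl (fun m hm => if_neg (by simpa using hm))]
  rw [Finset.sum_const, Finset.card_compl, card_five i j k l hi hj hk hl hij hik hil hjk hjl hkl]
  simp


lemma JX_EX (i j k l a : Fin 10) :
    JX i j k l (EX a) =
      if a = 0 then
        (11 : ℤ) • EX 0 - (5 : ℤ) • (EX i + EX j + EX k + EX l) - (2 : ℤ) • sX i j k l
      else if a = i ∨ a = j ∨ a = k ∨ a = l then
        (5 : ℤ) • EX 0 - (2 : ℤ) • (EX i + EX j + EX k + EX l) - EX a - sX i j k l
      else (2 : ℤ) • EX 0 - (EX i + EX j + EX k + EX l) - EX a := by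
  rw [sX]
  exact basisX.constr_basis ℤ _ a

set_option maxHeartbeats 8000000 in
lemma JX_form_EX (i j k l : Fin 10)
    (hi : i ≠ 0) (hj : j ≠ 0) (hk : k ≠ 0) (hl : l ≠ 0)
    (hij : i ≠ j) (hik : i ≠ k) (hil : i ≠ l) (hjk : j ≠ k) (hjl : j ≠ l) (hkl : k ≠ l)
    (a b : Fin 10) :
    formX (JX i j k l (EX a)) (JX i j k l (EX b)) = formX (EX a) (EX b) := by
  have h0i : (0:Fin 10) ≠ i := hi.symm
  have h0j : (0:Fin 10) ≠ j := hj.symm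
  have h0k : (0:Fin 10) ≠ k := hk.symm
  have h0l : (0:Fin 10) ≠ l := hl.symm
  have hji : j ≠ i := hij.symm
  have hki : k ≠ i := hik.symm
  have hli : l ≠ i := hil.symm
  have hkj : k ≠ j := hjk.symm
  have hlj : l ≠ j := hjl.symm
  have hlk : l ≠ k := hkl.symm
  have hss := formX_sX_sX i j k l hi hj hk hl hij hik hil hjk hjl hkl
  have trich : ∀ c : Fin 10, c = 0 ∨ c = i ∨ c = j ∨ c = k ∨ c = l ∨
      (c ≠ 0 ∧ c ≠ i ∧ c ≠ j ∧ c ≠ k ∧ c ≠ l ∧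
       (0:Fin 10) ≠ c ∧ i ≠ c ∧ j ≠ c ∧ k ≠ c ∧ l ≠ c) := by
    intro c
    by_cases h0 : c = 0
    · tauto
    by_cases h1 : c = i
    · tauto
    by_cases h2 : c = j
    · tauto
    by_cases h3 : c = k
    · tauto
    by_cases h4 : c = l
    · tauto
    exact Or.inr <| Or.inr <| Or.inr <| Or.inr <| Or.inr
      ⟨h0, h1, h2, h3, h4, Ne.symm h0, Ne.symm h1, Ne.symm h2, Ne.symm h3, Ne.symm h4⟩
  have ta := trich a
  have tb := trich b
  clear trich
  rw [JX_EX, JX_EX]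
  rcases ta with rfl | rfl | rfl | rfl | rfl |
      ⟨ha0, hai, haj, hak, hal, h0a, hia, hja, hka, hla⟩ <;>
    rcases tb with rfl | rfl | rfl | rfl | rfl |
      ⟨hb0, hbi, hbj, hbk, hbl, h0b, hib, hjb, hkb, hlb⟩ <;>
    (simp only [*, ite_true, ite_false, if_true, if_false, eq_self_iff_true, or_true, true_or,
       or_self, or_false, false_or, not_false_iff]
     simp only [map_sub, map_add, map_smul, LinearMap.sub_apply, LinearMap.add_apply,
       LinearMap.smul_apply, formX_EX, formX_sX_EX, formX_EX_sX, hss]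
     simp [Finset.mem_insert, Finset.mem_singleton, *]
     try ring_nf)

lemma eq_sum_EX (v : LX) : v = ∑ a, v a • EX a := by
  ext c
  simp [EX, basisX, Pi.single_apply, Finset.sum_ite_eq]

lemma sum_split (i j k l : Fin 10)
    (hi : i ≠ 0) (hj : j ≠ 0) (hk : k ≠ 0) (hl : l ≠ 0)
    (hij : i ≠ j) (hik : i ≠ k) (hil : i ≠ l) (hjk : j ≠ k) (hjl : j ≠ l) (hkl : k ≠ l)
    (F : Fin 10 → LX) :
    ∑ m ∈ ({0} : Finset (Fin 10))ᶜ, F m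
      = (F i + F j + F k + F l) + ∑ m ∈ ({0, i, j, k, l} : Finset (Fin 10))ᶜ, F m := by
  have hset : ∑ m ∈ ({0, i, j, k, l} : Finset (Fin 10)), F m
      = F 0 + F i + F j + F k + F l := by
    rw [Finset.sum_insert (by simp [Finset.mem_insert, hi.symm, hj.symm, hk.symm, hl.symm]),
      Finset.sum_insert (by simp [Finset.mem_insert, hij, hik, hil]),
      Finset.sum_insert (by simp [Finset.mem_insert, hjk, hjl]),
      Finset.sum_insert (by simp [Finset.mem_singleton, hkl]),
      Finset.sum_singleton]
    abel
  have e1 := Finset.sum_compl_add_sum ({0} : Finset (Fin 10)) F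
  have e2 := Finset.sum_compl_add_sum ({0, i, j, k, l} : Finset (Fin 10)) F
  rw [Finset.sum_singleton] at e1
  rw [hset] at e2
  have : ∑ m ∈ ({0} : Finset (Fin 10))ᶜ, F m + F 0
      = (F i + F j + F k + F l) + ∑ m ∈ ({0, i, j, k, l} : Finset (Fin 10))ᶜ, F m + F 0 := by
    rw [e1, ← e2]; abel
  exact add_right_cancel this

lemma JX_fixes (i j k l : Fin 10)
    (hi : i ≠ 0) (hj : j ≠ 0) (hk : k ≠ 0) (hl : l ≠ 0)
    (hij : i ≠ j) (hik : i ≠ k) (hil : i ≠ l) (hjk : j ≠ k) (hjl : j ≠ l) (hkl : k ≠ l) :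
    JX i j k l ((3 : ℤ) • EX 0 - ∑ m ∈ ({0} : Finset (Fin 10))ᶜ, EX m)
      = (3 : ℤ) • EX 0 - ∑ m ∈ ({0} : Finset (Fin 10))ᶜ, EX m := by
  have hcompl : ∀ m ∈ ({0, i, j, k, l} : Finset (Fin 10))ᶜ,
      JX i j k l (EX m) = (2 : ℤ) • EX 0 - (EX i + EX j + EX k + EX l) - EX m := by
    intro m hm
    simp only [Finset.mem_compl, Finset.mem_insert, Finset.mem_singleton, not_or] at hm
    obtain ⟨h0, h1, h2, h3, h4⟩ := hm
    rw [JX_EX, if_neg h0, if_neg (by tauto)]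
  have hJi : JX i j k l (EX i)
      = (5:ℤ) • EX 0 - (2:ℤ) • (EX i + EX j + EX k + EX l) - EX i - sX i j k l := by
    rw [JX_EX, if_neg hi, if_pos (by tauto)]
  have hJj : JX i j k l (EX j)
      = (5:ℤ) • EX 0 - (2:ℤ) • (EX i + EX j + EX k + EX l) - EX j - sX i j k l := by
    rw [JX_EX, if_neg hj, if_pos (by tauto)]
  have hJk : JX i j k l (EX k)
      = (5:ℤ) • EX 0 - (2:ℤ) • (EX i + EX j + EX k + EX l) - EX k - sX i j k l := by
    rw [JX_EX, if_neg hk, if_pos (by tauto)]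
  have hJl : JX i j k l (EX l)
      = (5:ℤ) • EX 0 - (2:ℤ) • (EX i + EX j + EX k + EX l) - EX l - sX i j k l := by
    rw [JX_EX, if_neg hl, if_pos (by tauto)]
  have hJ0 : JX i j k l (EX 0)
      = (11:ℤ) • EX 0 - (5:ℤ) • (EX i + EX j + EX k + EX l) - (2:ℤ) • sX i j k l := by
    rw [JX_EX, if_pos rfl]
  have hcard : ({0, i, j, k, l} : Finset (Fin 10))ᶜ.card = 5 := by
    rw [Finset.card_compl, card_five i j k l hi hj hk hl hij hik hil hjk hjl hkl]; rfl
  rw [map_sub, map_smul, map_sum, sum_split i j k l hi hj hk hl hij hik hil hjk hjl hkl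
    (fun m => JX i j k l (EX m)), Finset.sum_congr rfl hcompl,
    sum_split i j k l hi hj hk hl hij hik hil hjk hjl hkl EX]
  rw [Finset.sum_sub_distrib, Finset.sum_const, hcard, hJ0, hJi, hJj, hJk, hJl, ← sX]
  module

lemma JX_fixes_t (i j k l : Fin 10)
    (hi : i ≠ 0) (hj : j ≠ 0) (hk : k ≠ 0) (hl : l ≠ 0)
    (hij : i ≠ j) (hik : i ≠ k) (hil : i ≠ l) (hjk : j ≠ k) (hjl : j ≠ l) (hkl : k ≠ l) :
    JX i j k l ((2 : ℤ) • EX 0 - EX i - EX j - EX k - EX l)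
      = (2 : ℤ) • EX 0 - EX i - EX j - EX k - EX l := by
  have hJi : JX i j k l (EX i)
      = (5:ℤ) • EX 0 - (2:ℤ) • (EX i + EX j + EX k + EX l) - EX i - sX i j k l := by
    rw [JX_EX, if_neg hi, if_pos (by tauto)]
  have hJj : JX i j k l (EX j)
      = (5:ℤ) • EX 0 - (2:ℤ) • (EX i + EX j + EX k + EX l) - EX j - sX i j k l := by
    rw [JX_EX, if_neg hj, if_pos (by tauto)]
  have hJk : JX i j k l (EX k)
      = (5:ℤ) • EX 0 - (2:ℤ) • (EX i + EX j + EX k + EX l) - EX k - sX i j k l := by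
    rw [JX_EX, if_neg hk, if_pos (by tauto)]
  have hJl : JX i j k l (EX l)
      = (5:ℤ) • EX 0 - (2:ℤ) • (EX i + EX j + EX k + EX l) - EX l - sX i j k l := by
    rw [JX_EX, if_neg hl, if_pos (by tauto)]
  have hJ0 : JX i j k l (EX 0)
      = (11:ℤ) • EX 0 - (5:ℤ) • (EX i + EX j + EX k + EX l) - (2:ℤ) • sX i j k l := by
    rw [JX_EX, if_pos rfl]
  rw [map_sub, map_sub, map_sub, map_sub, map_smul, hJ0, hJi, hJj, hJk, hJl]
  module

lemma JX_isometry (i j k l : Fin 10)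
    (hi : i ≠ 0) (hj : j ≠ 0) (hk : k ≠ 0) (hl : l ≠ 0)
    (hij : i ≠ j) (hik : i ≠ k) (hil : i ≠ l) (hjk : j ≠ k) (hjl : j ≠ l) (hkl : k ≠ l)
    (lam mu : LX) : formX (JX i j k l lam) (JX i j k l mu) = formX lam mu := by
  rw [eq_sum_EX lam, eq_sum_EX mu]
  simp only [map_sum, map_smul, LinearMap.sum_apply, LinearMap.smul_apply, smul_eq_mul,
    JX_form_EX i j k l hi hj hk hl hij hik hil hjk hjl hkl]

/-- `J_{i,j,k,l}` preserves the bilinear form of `L_X` and fixes both the anticanonical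
class `δ = 3𝓔₀ - 𝓔₁ - ⋯ - 𝓔₉` and the class `2𝓔₀ - 𝓔ᵢ - 𝓔ⱼ - 𝓔ₖ - 𝓔ₗ`. -/
theorem JX_isometry_fixes_classes (i j k l : Fin 10)
    (hi : i ≠ 0) (hj : j ≠ 0) (hk : k ≠ 0) (hl : l ≠ 0)
    (hij : i ≠ j) (hik : i ≠ k) (hil : i ≠ l) (hjk : j ≠ k) (hjl : j ≠ l) (hkl : k ≠ l) :
    (∀ lam mu : LX, formX (JX i j k l lam) (JX i j k l mu) = formX lam mu) ∧
    JX i j k l deltaX = deltaX ∧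
    JX i j k l ((2 : ℤ) • EX 0 - EX i - EX j - EX k - EX l)
      = (2 : ℤ) • EX 0 - EX i - EX j - EX k - EX l := by
  refine ⟨JX_isometry i j k l hi hj hk hl hij hik hil hjk hjl hkl, ?_,
    JX_fixes_t i j k l hi hj hk hl hij hik hil hjk hjl hkl⟩
  rw [deltaX]
  exact JX_fixes i j k l hi hj hk hl hij hik hil hjk hjl hkl
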